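/- arXiv:0812.4487 — 2 statements merged into one kernel-verified Lean document; each statement's English description precedes it below -/
import Mathlib

section
/- Let p ≥ 5 be a prime, a a primitive root modulo p, θ = exp(2πi/(p−1)), η = exp(2πi/p). The p²(p−2) sequences φ_{x,y,z} (1 ≤ x ≤ p−2, 0 ≤ y, z ≤ p−1) are pairwise time-shift distinct: if (x, y, z) ≠ (x', y', z'), then for every t ∈ ℤ/pℤ, φ_{x,y,z} ≠ L_t[φ_{x',y',z'}], where L_t[φ](i) = φ(i + t). -/
open Complex Finset

/-- `η = exp(2πi/p)`, the `p`-th primitive root of unity. -/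
noncomputable def etaRoot (p : ℕ) : ℂ := Complex.exp (2 * Real.pi * Complex.I / p)

/-- `θ = exp(2πi/(p-1))`, the `(p-1)`-th primitive root of unity. -/
noncomputable def thetaRoot (p : ℕ) : ℂ := Complex.exp (2 * Real.pi * Complex.I / ((p - 1 : ℕ) : ℂ))

/-- The Construction A sequence `φ_{x,y,z} : ℤ/pℤ → ℂ`, defined by `φ(0) = 0` and
`φ(i) = θ^{x·log_a i} · η^{y i² + z i}` for `i ≠ 0`, where `dlog` is a discrete
logarithm function to base the fixed primitive root. -/
noncomputable def phiA (p : ℕ) [Fact p.Prime] (dlog : (ZMod p)ˣ → ℕ) (x y z : ℕ) :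
    ZMod p → ℂ :=
  fun i =>
    if h : i = 0 then 0
    else thetaRoot p ^ (x * dlog (Units.mk0 i h)) *
      etaRoot p ^ (((y : ZMod p) * i ^ 2 + (z : ZMod p) * i).val)

lemma crt_split (p : ℕ) (hp : 5 ≤ p) {A B A' B' : ℕ}
    (h : thetaRoot p ^ A * etaRoot p ^ B = thetaRoot p ^ A' * etaRoot p ^ B') :
    A ≡ A' [MOD p - 1] ∧ B ≡ B' [MOD p] := by
  have hη : IsPrimitiveRoot (etaRoot p) p := Complex.isPrimitiveRoot_exp p (by omega)
  have hθ : IsPrimitiveRoot (thetaRoot p) (p - 1) := Complex.isPrimitiveRoot_exp (p - 1) (by omega)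
  have hθ1 : thetaRoot p ^ (p - 1) = 1 := hθ.pow_eq_one
  have hη1 : etaRoot p ^ p = 1 := hη.pow_eq_one
  have hordθ : orderOf (thetaRoot p) = p - 1 := hθ.eq_orderOf.symm
  have hordη : orderOf (etaRoot p) = p := hη.eq_orderOf.symm
  have hcop : Nat.gcd p (p - 1) = 1 := by
    have hd := Nat.dvd_sub (Nat.gcd_dvd_left p (p - 1)) (Nat.gcd_dvd_right p (p - 1))
    have hps : p - (p - 1) = 1 := by omega
    rw [hps] at hd
    exact Nat.dvd_one.mp hd
  have hcop' : Nat.gcd (p - 1) p = 1 := Nat.Coprime.symm hcop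
  have hθne : thetaRoot p ≠ 0 := Complex.exp_ne_zero _
  have hηne : etaRoot p ≠ 0 := Complex.exp_ne_zero _
  constructor
  · have e1 : ∀ C D : ℕ, (thetaRoot p ^ C * etaRoot p ^ D) ^ p = thetaRoot p ^ (C * p) := by
      intro C D
      have hD : (etaRoot p ^ D) ^ p = 1 := by
        rw [← pow_mul, mul_comm, pow_mul, hη1, one_pow]
      rw [mul_pow, hD, mul_one, ← pow_mul]
    have h2 : thetaRoot p ^ (A * p) = thetaRoot p ^ (A' * p) := by
      rw [← e1 A B, ← e1 A' B', h]
    have h3 : Units.mk0 (thetaRoot p) hθne ^ (A * p) = Units.mk0 (thetaRoot p) hθne ^ (A' * p) :=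
      Units.ext (by simpa using h2)
    have := pow_eq_pow_iff_modEq.mp h3
    rw [← orderOf_units, Units.val_mk0, hordθ] at this
    exact Nat.ModEq.cancel_right_of_coprime hcop' this
  · have e1 : ∀ C D : ℕ, (thetaRoot p ^ C * etaRoot p ^ D) ^ (p - 1) = etaRoot p ^ (D * (p - 1)) := by
      intro C D
      have hC : (thetaRoot p ^ C) ^ (p - 1) = 1 := by
        rw [← pow_mul, mul_comm, pow_mul, hθ1, one_pow]
      rw [mul_pow, hC, one_mul, ← pow_mul]
    have h2 : etaRoot p ^ (B * (p - 1)) = etaRoot p ^ (B' * (p - 1)) := by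
      rw [← e1 A B, ← e1 A' B', h]
    have h3 : Units.mk0 (etaRoot p) hηne ^ (B * (p - 1)) = Units.mk0 (etaRoot p) hηne ^ (B' * (p - 1)) :=
      Units.ext (by simpa using h2)
    have := pow_eq_pow_iff_modEq.mp h3
    rw [← orderOf_units, Units.val_mk0, hordη] at this
    exact Nat.ModEq.cancel_right_of_coprime hcop this

theorem stmt4 (p : ℕ) [Fact p.Prime] (hp : 5 ≤ p)
    (a : (ZMod p)ˣ) (dlog : (ZMod p)ˣ → ℕ) (ha : ∀ u : (ZMod p)ˣ, a ^ dlog u = u)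
    (x y z x' y' z' : ℕ)
    (hx1 : 1 ≤ x) (hx2 : x ≤ p - 2) (hy : y ≤ p - 1) (hz : z ≤ p - 1)
    (hx1' : 1 ≤ x') (hx2' : x' ≤ p - 2) (hy' : y' ≤ p - 1) (hz' : z' ≤ p - 1)
    (hne : (x, y, z) ≠ (x', y', z')) :
    ∀ t : ZMod p, phiA p dlog x y z ≠ fun i => phiA p dlog x' y' z' (i + t) := by
  intro t heq
  have hθne : thetaRoot p ≠ 0 := Complex.exp_ne_zero _
  have hηne : etaRoot p ≠ 0 := Complex.exp_ne_zero _
  have hnz : ∀ (u v w : ℕ) (i : ZMod p), i ≠ 0 → phiA p dlog u v w i ≠ 0 := by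
    intro u v w i hi
    unfold phiA
    rw [dif_neg hi]
    exact mul_ne_zero (pow_ne_zero _ hθne) (pow_ne_zero _ hηne)
  -- t = 0
  have ht : t = 0 := by
    by_contra h
    have h1 := congrFun heq (-t)
    simp only [neg_add_cancel] at h1
    have h2 : phiA p dlog x' y' z' 0 = 0 := by unfold phiA; rw [dif_pos rfl]
    exact hnz x y z (-t) (neg_ne_zero.mpr h) (h1.trans h2)
  subst ht
  -- pointwise equality on units
  have key : ∀ u : (ZMod p)ˣ,
      thetaRoot p ^ (x * dlog u) * etaRoot p ^ (((y : ZMod p) * (u : ZMod p) ^ 2 + (z : ZMod p) * u).val)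
      = thetaRoot p ^ (x' * dlog u) * etaRoot p ^ (((y' : ZMod p) * (u : ZMod p) ^ 2 + (z' : ZMod p) * u).val) := by
    intro u
    have h1 := congrFun heq (u : ZMod p)
    simp only [add_zero] at h1
    unfold phiA at h1
    rw [dif_neg u.ne_zero, dif_neg u.ne_zero] at h1
    have hu : Units.mk0 (u : ZMod p) u.ne_zero = u := Units.ext rfl
    rwa [hu] at h1
  have keyC := fun u => crt_split p hp (key u)
  -- deduce x = x'
  have horda : orderOf a = p - 1 := by
    rw [orderOf_eq_card_of_forall_mem_zpowers (fun u => ⟨dlog u, by simpa using ha u⟩)]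
    rw [Nat.card_eq_fintype_card]
    exact ZMod.card_units p
  have hda : dlog a ≡ 1 [MOD p - 1] := by
    have : a ^ dlog a = a ^ 1 := by rw [pow_one]; exact ha a
    have := pow_eq_pow_iff_modEq.mp this
    rwa [horda] at this
  have hxx : x ≡ x' [MOD p - 1] := by
    have h1 := (keyC a).1
    calc x ≡ x * dlog a [MOD p - 1] := by
            simpa using (Nat.ModEq.mul_left x hda).symm
      _ ≡ x' * dlog a [MOD p - 1] := h1
      _ ≡ x' [MOD p - 1] := by simpa using Nat.ModEq.mul_left x' hda
  have hxval : x = x' := by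
    have h1 : x % (p - 1) = x := Nat.mod_eq_of_lt (by omega)
    have h2 : x' % (p - 1) = x' := Nat.mod_eq_of_lt (by omega)
    have := hxx
    unfold Nat.ModEq at this
    omega
  -- deduce quadratic equality in ZMod p for all i
  have hquad : ∀ i : ZMod p,
      (y : ZMod p) * i ^ 2 + (z : ZMod p) * i = (y' : ZMod p) * i ^ 2 + (z' : ZMod p) * i := by
    intro i
    rcases eq_or_ne i 0 with rfl | hi
    · simp
    · have h1 := (keyC (Units.mk0 i hi)).2
      simp only [Units.val_mk0] at h1
      have hval : ((y : ZMod p) * i ^ 2 + (z : ZMod p) * i).val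
          = ((y' : ZMod p) * i ^ 2 + (z' : ZMod p) * i).val := by
        exact Nat.ModEq.eq_of_lt_of_lt h1 (ZMod.val_lt _) (ZMod.val_lt _)
      exact ZMod.val_injective p hval
  have h1 := hquad 1
  have h2 := hquad (-1)
  simp only [one_pow, mul_one] at h1
  simp only [neg_one_sq, mul_one, mul_neg_one] at h2
  have h2' : (y : ZMod p) - z = (y' : ZMod p) - z' := by
    rw [sub_eq_add_neg, sub_eq_add_neg]; exact h2
  have h2ne : (2 : ZMod p) ≠ 0 := by
    have : ((2 : ℕ) : ZMod p) ≠ 0 := by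
      rw [Ne, ZMod.natCast_eq_zero_iff]
      intro hdvd
      have := Nat.le_of_dvd (by norm_num) hdvd
      omega
    simpa using this
  have hyz : (y : ZMod p) = y' := by
    have : (2 : ZMod p) * y = 2 * y' := by ring_nf; linear_combination h1 + h2'
    exact mul_left_cancel₀ h2ne this
  have hzz : (z : ZMod p) = z' := by linear_combination h1 - hyz
  have hyval : y = y' := by
    have := congrArg ZMod.val hyz
    rwa [ZMod.val_cast_of_lt (by omega), ZMod.val_cast_of_lt (by omega)] at this
  have hzval : z = z' := by
    have := congrArg ZMod.val hzz
    rwa [ZMod.val_cast_of_lt (by omega), ZMod.val_cast_of_lt (by omega)] at this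
  exact hne (by rw [hxval, hyval, hzval])
end

section
/- Let p be an odd prime, η = exp(2πi/p), and let S be a set of sequences φ : ℤ/pℤ → ℂ. Suppose σ, ρ are real numbers such that (i) for every φ ∈ S and every (t, w) ≠ (0, 0), |A_φ(t, w)| ≤ σ, and (ii) for every pair φ, ψ ∈ S that are phase-shift distinct, |A_{φ,ψ}(t, w)| ≤ ρ for all (t, w). Then the same bounds hold for the Fourier transforms: for every φ ∈ S and (t, w) ≠ (0, 0), |A_{F[φ]}(t, w)| ≤ σ, and for every phase-shift distinct pair φ, ψ ∈ S, |A_{F[φ], F[ψ]}(t, w)| ≤ ρ for all (t, w). In particular, the auto- and cross-correlation functions satisfy |C_φ(t)| ≤ σ for t ≠ 0 and |C_{φ,ψ}(t)| ≤ ρ for phase-shift distinct φ, ψ. -/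
open Complex Finset

/-- The time-shift operator `L_t[φ](i) = φ(i + t)`. -/
def Lop (p : ℕ) (t : ZMod p) (φ : ZMod p → ℂ) : ZMod p → ℂ := fun i => φ (i + t)

/-- The phase-shift operator `M_w[φ](i) = η^{w i}·φ(i)`. -/
noncomputable def Mop (p : ℕ) [NeZero p] (w : ZMod p) (φ : ZMod p → ℂ) : ZMod p → ℂ :=
  fun i => etaRoot p ^ ((w * i).val) * φ i

/-- The discrete Fourier transform `F[φ](j) = (1/√p)·Σ_i η^{j i}·φ(i)`. -/
noncomputable def Fop (p : ℕ) [NeZero p] (φ : ZMod p → ℂ) : ZMod p → ℂ :=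
  fun j => (1 / (Real.sqrt p : ℂ)) * ∑ i : ZMod p, etaRoot p ^ ((j * i).val) * φ i

/-- The inner product `⟨φ,ψ⟩ = Σ_i φ(i)·conj(ψ(i))`. -/
noncomputable def innerSeq (p : ℕ) [NeZero p] (φ ψ : ZMod p → ℂ) : ℂ :=
  ∑ i : ZMod p, φ i * (starRingEnd ℂ) (ψ i)

/-- The ambiguity function `A_{φ,ψ}(t,w) = ⟨φ, M_w L_t ψ⟩`. -/
noncomputable def amb (p : ℕ) [NeZero p] (φ ψ : ZMod p → ℂ) (t w : ZMod p) : ℂ :=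
  innerSeq p φ (Mop p w (Lop p t ψ))

/-- `φ` and `ψ` are phase-shift distinct: `ψ ≠ M_w φ` for all `w`. -/
def PhaseShiftDistinct (p : ℕ) [NeZero p] (φ ψ : ZMod p → ℂ) : Prop :=
  ∀ w : ZMod p, ψ ≠ Mop p w φ

/-! The Fourier transform intertwines the two kinds of shift, `F ∘ M_w = L_w ∘ F` and
`F ∘ L_t = M_{-t} ∘ F`, and it is unitary (Parseval). Hence `A_{F φ, F ψ}(t, w)` equals
`A_{φ, ψ}(-w, t)` up to a unimodular factor, and `(t, w) ↦ (-w, t)` permutes the nonzero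
lag pairs. The correlation bounds are the case `w = 0` of the hypotheses. -/

open ZMod ComplexConjugate

section
variable {p : ℕ} [NeZero p]

-- Passing to Mathlib's standard character makes orthogonality and `|χ| = 1` available.
lemma etaRoot_pow_val (a : ZMod p) : etaRoot p ^ a.val = stdAddChar a := by
  rw [stdAddChar_apply, toCircle_apply, etaRoot, ← Complex.exp_nat_mul]
  congr 1
  ring

lemma Mop_apply (w : ZMod p) (φ : ZMod p → ℂ) (i : ZMod p) :
    Mop p w φ i = stdAddChar (w * i) * φ i := by
  rw [Mop, etaRoot_pow_val]

lemma Fop_apply (φ : ZMod p → ℂ) (j : ZMod p) :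
    Fop p φ j = (√p : ℂ)⁻¹ * ∑ i, stdAddChar (j * i) * φ i := by
  simp only [Fop, etaRoot_pow_val, one_div]

lemma Fop_smul (c : ℂ) (φ : ZMod p → ℂ) : Fop p (c • φ) = c • Fop p φ := by
  ext j
  simp only [Fop_apply, Pi.smul_apply, smul_eq_mul, Finset.mul_sum]
  exact Finset.sum_congr rfl fun i _ => by ring

lemma innerSeq_smul_right (c : ℂ) (φ ψ : ZMod p → ℂ) :
    innerSeq p φ (c • ψ) = conj c * innerSeq p φ ψ := by
  simp only [innerSeq, Pi.smul_apply, smul_eq_mul, map_mul, Finset.mul_sum]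
  exact Finset.sum_congr rfl fun i _ => by ring

lemma Fop_Mop (w : ZMod p) (φ : ZMod p → ℂ) : Fop p (Mop p w φ) = Lop p w (Fop p φ) := by
  ext j
  simp only [Fop_apply, Mop_apply, Lop, add_mul, AddChar.map_add_eq_mul, mul_assoc, mul_comm w]

lemma Fop_Lop (t : ZMod p) (φ : ZMod p → ℂ) : Fop p (Lop p t φ) = Mop p (-t) (Fop p φ) := by
  ext j
  have hshift : ∑ i, stdAddChar (j * i) * φ (i + t) =
      stdAddChar (-t * j) * ∑ i, stdAddChar (j * i) * φ i := by
    rw [Finset.mul_sum]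
    refine Fintype.sum_equiv (Equiv.addRight t) _ _ fun i => ?_
    rw [Equiv.coe_addRight, ← mul_assoc, ← AddChar.map_add_eq_mul]
    ring_nf
  rw [Fop_apply, Mop_apply, Fop_apply, mul_left_comm, ← hshift]
  rfl

lemma Lop_Mop (t w : ZMod p) (φ : ZMod p → ℂ) :
    Lop p t (Mop p w φ) = stdAddChar (w * t) • Mop p w (Lop p t φ) := by
  ext i
  simp only [Lop, Mop_apply, Pi.smul_apply, smul_eq_mul, ← mul_assoc, ← AddChar.map_add_eq_mul]
  ring_nf

lemma sum_stdAddChar_mul (a : ZMod p) :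
    ∑ j : ZMod p, stdAddChar (j * a) = if a = 0 then (p : ℂ) else 0 := by
  rw [AddChar.sum_mulShift a (isPrimitive_stdAddChar p), ZMod.card, Nat.cast_ite, Nat.cast_zero]

theorem innerSeq_Fop_Fop (φ ψ : ZMod p → ℂ) :
    innerSeq p (Fop p φ) (Fop p ψ) = innerSeq p φ ψ := by
  have hp : (p : ℂ) ≠ 0 := Nat.cast_ne_zero.mpr (NeZero.ne p)
  have hsqrt : (√p : ℂ)⁻¹ * conj (√p : ℂ)⁻¹ = (p : ℂ)⁻¹ := by
    rw [map_inv₀, Complex.conj_ofReal, ← mul_inv, ← Complex.ofReal_mul,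
      Real.mul_self_sqrt (Nat.cast_nonneg p), Complex.ofReal_natCast]
  have hterm : ∀ j, Fop p φ j * conj (Fop p ψ j) =
      (p : ℂ)⁻¹ * ∑ i, ∑ k, stdAddChar (j * (i - k)) * (φ i * conj (ψ k)) := by
    intro j
    rw [Fop_apply, Fop_apply, map_mul, mul_mul_mul_comm, hsqrt, map_sum, Finset.sum_mul_sum]
    congr 1
    refine Finset.sum_congr rfl fun i _ => Finset.sum_congr rfl fun k _ => ?_
    rw [map_mul (starRingEnd ℂ), ← AddChar.map_neg_eq_conj, mul_sub, sub_eq_add_neg,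
      AddChar.map_add_eq_mul]
    ring
  calc innerSeq p (Fop p φ) (Fop p ψ)
      = (p : ℂ)⁻¹ * ∑ i, ∑ k, (∑ j : ZMod p, stdAddChar (j * (i - k))) * (φ i * conj (ψ k)) := by
        simp only [innerSeq, hterm, ← Finset.mul_sum, Finset.sum_mul]
        rw [Finset.sum_comm]
        exact congrArg _ (Finset.sum_congr rfl fun i _ => Finset.sum_comm)
    _ = innerSeq p φ ψ := by
        simp only [sum_stdAddChar_mul, sub_eq_zero, ite_mul, zero_mul, Finset.sum_ite_eq,
          Finset.mem_univ, if_true, innerSeq, Finset.mul_sum, inv_mul_cancel_left₀ hp]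

lemma Mop_Fop (w : ZMod p) (φ : ZMod p → ℂ) : Mop p w (Fop p φ) = Fop p (Lop p (-w) φ) := by
  rw [Fop_Lop, neg_neg]

theorem amb_Fop_Fop (φ ψ : ZMod p → ℂ) (t w : ZMod p) :
    amb p (Fop p φ) (Fop p ψ) t w = stdAddChar (t * w) * amb p φ ψ (-w) t := by
  rw [amb, ← Fop_Mop, Mop_Fop, Lop_Mop, Fop_smul, innerSeq_smul_right, innerSeq_Fop_Fop,
    ← AddChar.map_neg_eq_conj, mul_neg, neg_neg, amb]

lemma norm_amb_Fop_Fop (φ ψ : ZMod p → ℂ) (t w : ZMod p) :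
    ‖amb p (Fop p φ) (Fop p ψ) t w‖ = ‖amb p φ ψ (-w) t‖ := by
  rw [amb_Fop_Fop, norm_mul, AddChar.norm_apply, one_mul]

end

theorem stmt8_general (p : ℕ) [Fact p.Prime]
    (S : Set (ZMod p → ℂ)) (σ ρ : ℝ)
    (hσ : ∀ φ ∈ S, ∀ t w : ZMod p, (t, w) ≠ (0, 0) → ‖amb p φ φ t w‖ ≤ σ)
    (hρ : ∀ φ ∈ S, ∀ ψ ∈ S, PhaseShiftDistinct p φ ψ →
      ∀ t w : ZMod p, ‖amb p φ ψ t w‖ ≤ ρ) :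
    (∀ φ ∈ S, ∀ t w : ZMod p, (t, w) ≠ (0, 0) →
        ‖amb p (Fop p φ) (Fop p φ) t w‖ ≤ σ) ∧
    (∀ φ ∈ S, ∀ ψ ∈ S, PhaseShiftDistinct p φ ψ →
        ∀ t w : ZMod p, ‖amb p (Fop p φ) (Fop p ψ) t w‖ ≤ ρ) ∧
    (∀ φ ∈ S, ∀ t : ZMod p, t ≠ 0 → ‖amb p φ φ t 0‖ ≤ σ) ∧
    (∀ φ ∈ S, ∀ ψ ∈ S, PhaseShiftDistinct p φ ψ →
        ∀ t : ZMod p, ‖amb p φ ψ t 0‖ ≤ ρ) := by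
  refine ⟨fun φ hφ t w htw => ?_, fun φ hφ ψ hψ hd t w => ?_,
    fun φ hφ t ht => hσ φ hφ t 0 (by simp [ht]), fun φ hφ ψ hψ hd t => hρ φ hφ ψ hψ hd t 0⟩
  · rw [norm_amb_Fop_Fop]
    refine hσ φ hφ (-w) t fun h => htw ?_
    simpa [and_comm] using h
  · rw [norm_amb_Fop_Fop]
    exact hρ φ hφ ψ hψ hd (-w) t

theorem stmt8 (p : ℕ) [Fact p.Prime] (hodd : Odd p)
    (S : Set (ZMod p → ℂ)) (σ ρ : ℝ)
    (hσ : ∀ φ ∈ S, ∀ t w : ZMod p, (t, w) ≠ (0, 0) → ‖amb p φ φ t w‖ ≤ σ)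
    (hρ : ∀ φ ∈ S, ∀ ψ ∈ S, PhaseShiftDistinct p φ ψ →
      ∀ t w : ZMod p, ‖amb p φ ψ t w‖ ≤ ρ) :
    (∀ φ ∈ S, ∀ t w : ZMod p, (t, w) ≠ (0, 0) →
        ‖amb p (Fop p φ) (Fop p φ) t w‖ ≤ σ) ∧
    (∀ φ ∈ S, ∀ ψ ∈ S, PhaseShiftDistinct p φ ψ →
        ∀ t w : ZMod p, ‖amb p (Fop p φ) (Fop p ψ) t w‖ ≤ ρ) ∧
    (∀ φ ∈ S, ∀ t : ZMod p, t ≠ 0 → ‖amb p φ φ t 0‖ ≤ σ) ∧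
    (∀ φ ∈ S, ∀ ψ ∈ S, PhaseShiftDistinct p φ ψ →
        ∀ t : ZMod p, ‖amb p φ ψ t 0‖ ≤ ρ) :=
  stmt8_general p S σ ρ hσ hρ
end
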